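/- For every separable metrizable topological space M, it is not the case that K(M) ≥_T Σ(ω^{ω₁}); that is, there is no map φ : K(M) → Σ(ω^{ω₁}) carrying cofinal subsets of K(M) to cofinal subsets of Σ(ω^{ω₁}). -/

import Mathlib

open Cardinal Set

universe u v

/-- `C` is cofinal for `P'` in `P`: every element of `P'` lies below some element of `C`. -/
def IsCofinalFor' {P : Type u} [Preorder P] (P' C : Set P) : Prop :=
  ∀ p ∈ P', ∃ c ∈ C, p ≤ c

/-- `φ : P → Q` is a relative Tukey quotient from `(P', P)` to `(Q', Q)`:
it maps every subset of `P` cofinal for `P'` to a subset of `Q` cofinal for `Q'`. -/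
def IsRelTukeyQuotient {P : Type u} {Q : Type v} [Preorder P] [Preorder Q]
    (P' : Set P) (Q' : Set Q) (φ : P → Q) : Prop :=
  ∀ C : Set P, IsCofinalFor' P' C → IsCofinalFor' Q' (φ '' C)

/-- `(P', P) ≥_T (Q', Q)`: there exists a relative Tukey quotient. -/
def RelTukeyGE {P : Type u} {Q : Type v} [Preorder P] [Preorder Q]
    (P' : Set P) (Q' : Set Q) : Prop :=
  ∃ φ : P → Q, IsRelTukeyQuotient P' Q' φ

/-- `P ≥_T Q`: there is a Tukey quotient from `P` to `Q`. -/
def TukeyGE (P : Type u) (Q : Type v) [Preorder P] [Preorder Q] : Prop :=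
  RelTukeyGE (Set.univ : Set P) (Set.univ : Set Q)

/-- `A` is unbounded in `P`: it has no upper bound in `P`. -/
def UnboundedIn {P : Type u} [Preorder P] (A : Set P) : Prop :=
  ¬ ∃ b : P, ∀ a ∈ A, a ≤ b

noncomputable section

/-- `ω₁`: the set of countable ordinals, as the canonical well-order of order type `ω₁`. -/
def O1 : Type := (Cardinal.aleph 1).ord.ToType

noncomputable instance : LinearOrder O1 :=
  inferInstanceAs (LinearOrder (Cardinal.aleph 1).ord.ToType)

/-- `ω₁` carries its order topology. -/
instance : TopologicalSpace O1 := Preorder.topology O1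

instance : OrderTopology O1 := ⟨rfl⟩

/-- `K(S)` for `S ⊆ ω₁`: the compact subsets of `S` (equivalently, compact subsets of `ω₁`
contained in `S`), ordered by inclusion. -/
def KS (S : Set O1) : Type := {K : Set O1 // K ⊆ S ∧ IsCompact K}

instance (S : Set O1) : PartialOrder (KS S) := Subtype.partialOrder _

/-- `A ⊆ ω₁` is bounded in `ω₁`. -/
def BddO1 (A : Set O1) : Prop := ∃ β : O1, ∀ x ∈ A, x ≤ β

/-- `Σ(ω^{ω₁})`: the functions `f : ω₁ → ℕ` which vanish beyond some countable ordinal,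
with the pointwise order. -/
def SigmaOm : Type := {f : O1 → ℕ // ∃ γ : O1, ∀ β : O1, γ < β → f β = 0}

instance : PartialOrder SigmaOm := Subtype.partialOrder _

/-- `K(M)`: the poset of compact subsets of a space `M`, ordered by inclusion. -/
def KM (M : Type u) [TopologicalSpace M] : Type u := {K : Set M // IsCompact K}

instance (M : Type u) [TopologicalSpace M] : PartialOrder (KM M) := Subtype.partialOrder _

/-!
A Tukey quotient `φ : K(M) → Σ(ω^{ω₁})` comes with `ψ` such that `ψ f ⊆ K` forces `f ≤ φ K`.
Let `f_β` inject `[0, β]` into `ℕ`. Over any uncountable set of indices `β`, the values `f_β γ` stay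
bounded for only countably many `γ`, because `f_β` is injective on `[0, β]`. The compact sets
`ψ f_β` have a condensation point `K₀` in the (second countable) Vietoris hyperspace. So there is a
`γ` and indices `β_m` with `f_{β_m} γ > m` and `ψ f_{β_m} → K₀`. The union of a convergent sequence
of compact sets and its limit is compact, and `φ` of that compact set would dominate every `f_{β_m}`.
-/

open TopologicalSpace Filter Topology

theorem TukeyGE.exists_tukey_pair {P : Type u} {Q : Type v} [Preorder P] [Preorder Q]
    (h : TukeyGE P Q) : ∃ (φ : P → Q) (ψ : Q → P), ∀ q p, ψ q ≤ p → q ≤ φ p := by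
  obtain ⟨φ, hφ⟩ := h
  suffices ∀ q, ∃ p₀, ∀ p, p₀ ≤ p → q ≤ φ p by
    choose ψ hψ using this
    exact ⟨φ, ψ, hψ⟩
  intro q
  by_contra! hq
  obtain ⟨_, ⟨p, hp, rfl⟩, hqp⟩ :=
    hφ {p | ¬ q ≤ φ p} (fun p₀ _ => (hq p₀).imp fun _ hp => ⟨hp.2, hp.1⟩) q trivial
  exact hp hqp

/-- A condensation point of `u` is a cluster point of the image of the cocountable filter. -/
theorem LindelofSpace.exists_forall_nhds_not_countable_preimage {X I : Type*}
    [TopologicalSpace X] [LindelofSpace X] [Uncountable I] (u : I → X) :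
    ∃ x, ∀ V ∈ 𝓝 x, ¬ (u ⁻¹' V).Countable := by
  have : CountableInterFilter (cocountable : Filter I) :=
    cardinalInterFilter_aleph_one_iff.1 inferInstance
  have : (cocountable : Filter I).NeBot := forall_mem_nonempty_iff_neBot.1 fun s hs =>
    nonempty_iff_ne_empty.2 fun h => not_countable_univ (by simpa [h] using mem_cocountable.1 hs)
  obtain ⟨x, -, hx⟩ := isLindelof_univ (f := map u cocountable) (le_principal_iff.2 univ_mem)
  refine ⟨x, fun V hV hVc => ?_⟩
  obtain ⟨y, hyV, hyVc⟩ := clusterPt_iff_nonempty.1 hx hV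
    (show Vᶜ ∈ map u cocountable from mem_cocountable.2 (by simpa using hVc))
  exact hyVc hyV

/-- Choosing `K (i m)` within the `m`-th neighbourhood of a condensation point in the Vietoris
topology gives a convergent sequence, so all `K (i m)` lie in the compact union of its closure. -/
theorem TopologicalSpace.Compacts.exists_uncountable_seq_forall_bdd {X I : Type*}
    [TopologicalSpace X] [SecondCountableTopology X] [Uncountable I] (K : I → Compacts X) :
    ∃ S : ℕ → Set I, (∀ m, ¬ (S m).Countable) ∧
      ∀ i : ℕ → I, (∀ m, i m ∈ S m) → ∃ L : Compacts X, ∀ m, K (i m) ≤ L := by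
  obtain ⟨K₀, hK₀⟩ := LindelofSpace.exists_forall_nhds_not_countable_preimage K
  obtain ⟨V, hV⟩ := (𝓝 K₀).exists_antitone_basis
  refine ⟨fun m => K ⁻¹' V m, fun m => hK₀ _ (hV.mem m), fun i hi => ?_⟩
  have hlim : Tendsto (K ∘ i) atTop (𝓝 K₀) := hV.tendsto hi
  refine ⟨⟨_, Compacts.isCompact_biUnion_coe_of_isCompact hlim.isCompact_insert_range⟩,
    fun m => ?_⟩
  exact subset_biUnion_of_mem (u := fun L : Compacts X => (L : Set X))
    (Set.mem_insert_of_mem _ (Set.mem_range_self m))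

section SegmentEncode

variable {α : Type*} [LinearOrder α]

theorem not_bddAbove_of_not_countable (hα : ∀ β : α, (Iic β).Countable) {Ω : Set α}
    (hΩ : ¬ Ω.Countable) : ¬ BddAbove Ω :=
  fun ⟨β, hβ⟩ => hΩ ((hα β).mono hβ)

variable (hα : ∀ β : α, (Iic β).Countable)

def segmentEncode (β γ : α) : ℕ :=
  if hγ : γ ≤ β then @Encodable.encode _ (hα β).toEncodable ⟨γ, hγ⟩ else 0

theorem segmentEncode_eq_zero {β γ : α} (h : β < γ) : segmentEncode hα β γ = 0 :=
  dif_neg h.not_ge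

theorem segmentEncode_injOn (β : α) : InjOn (segmentEncode hα β) (Iic β) := by
  intro γ₁ h₁ γ₂ h₂ h
  simp only [segmentEncode, dif_pos (show γ₁ ≤ β from h₁), dif_pos (show γ₂ ≤ β from h₂)] at h
  exact congrArg Subtype.val (@Encodable.encode_injective _ (hα β).toEncodable _ _ h)

theorem finite_setOf_forall_segmentEncode_le {Ω : Set α} (hΩ : ¬ BddAbove Ω) (N : ℕ) :
    {γ | ∀ β ∈ Ω, segmentEncode hα β γ ≤ N}.Finite := by
  by_contra hinf
  obtain ⟨t, hts, htcard⟩ := Set.Infinite.exists_subset_card_eq hinf (N + 2)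
  have htne : t.Nonempty := Finset.card_pos.1 (by omega)
  obtain ⟨β, hβΩ, hβ⟩ := not_bddAbove_iff.1 hΩ (t.max' htne)
  have htβ : (t : Set α) ⊆ Iic β := fun γ hγ => (t.le_max' γ hγ).trans hβ.le
  have hcard := Finset.card_le_card_of_injOn (segmentEncode hα β) (t := Finset.range (N + 1))
    (fun γ hγ => Finset.mem_range.2 (Nat.lt_succ_of_le (hts hγ β hβΩ)))
    ((segmentEncode_injOn hα β).mono htβ)
  simp only [htcard, Finset.card_range] at hcard
  omega

theorem countable_setOf_bddAbove_segmentEncode {Ω : Set α} (hΩ : ¬ BddAbove Ω) :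
    {γ | BddAbove ((segmentEncode hα · γ) '' Ω)}.Countable := by
  have : {γ | BddAbove ((segmentEncode hα · γ) '' Ω)} =
      ⋃ N : ℕ, {γ | ∀ β ∈ Ω, segmentEncode hα β γ ≤ N} := by
    ext γ
    simp [bddAbove_def]
  rw [this]
  exact countable_iUnion fun N => (finite_setOf_forall_segmentEncode_le hα hΩ N).countable

theorem exists_forall_segmentEncode_unbounded [Uncountable α] {Ω : ℕ → Set α}
    (hΩ : ∀ m, ¬ (Ω m).Countable) : ∃ γ, ∀ m N, ∃ β ∈ Ω m, N < segmentEncode hα β γ := by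
  have hcount := countable_iUnion fun m =>
    countable_setOf_bddAbove_segmentEncode hα (not_bddAbove_of_not_countable hα (hΩ m))
  obtain ⟨γ, hγ⟩ : ∃ γ, ∀ m, ¬ BddAbove ((segmentEncode hα · γ) '' Ω m) := by
    by_contra! h
    exact not_countable_univ (hcount.mono fun γ _ => mem_iUnion.2 (h γ))
  refine ⟨γ, fun m N => ?_⟩
  obtain ⟨_, ⟨β, hβ, rfl⟩, hN⟩ := not_bddAbove_iff.1 (hγ m) N
  exact ⟨β, hβ, hN⟩

end SegmentEncode

namespace O1

theorem countable_Iic (β : O1) : (Iic β).Countable := by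
  have hIio : (Iio β).Countable := by
    have := mk_Iio_lt (α := (aleph 1).ord.ToType) β (by simp)
    simp only [card_ord, mk_toType] at this
    exact le_aleph0_iff_set_countable.1 (lt_aleph_one_iff.1 this)
  rw [← Iio_union_right]
  exact hIio.union (countable_singleton β)

instance : Uncountable O1 := by
  rw [← aleph0_lt_mk_iff]
  simp [O1]

end O1

def SigmaOm.ofSegment (β : O1) : SigmaOm :=
  ⟨segmentEncode O1.countable_Iic β, β, fun _ => segmentEncode_eq_zero _⟩

theorem statement17 (M : Type u) [TopologicalSpace M]
    [TopologicalSpace.MetrizableSpace M] [TopologicalSpace.SeparableSpace M] :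
    ¬ TukeyGE (KM M) SigmaOm := by
  let := metrizableSpaceMetric M
  have := UniformSpace.secondCountable_of_separable M
  intro h
  obtain ⟨φ, ψ, hψ⟩ := h.exists_tukey_pair
  obtain ⟨S, hS, hbdd⟩ := Compacts.exists_uncountable_seq_forall_bdd
    fun β : O1 => (⟨(ψ (.ofSegment β)).1, (ψ (.ofSegment β)).2⟩ : Compacts M)
  obtain ⟨γ, hγ⟩ := exists_forall_segmentEncode_unbounded O1.countable_Iic hS
  choose β hβS hβγ using fun m => hγ m m
  obtain ⟨L, hL⟩ := hbdd β hβS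
  have hunbdd : ∀ m, m < (φ ⟨L, L.isCompact⟩).1 γ := fun m =>
    (hβγ m).trans_le (hψ _ ⟨L, L.isCompact⟩ (hL m) γ)
  exact (hunbdd _).false
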